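/- arXiv:math/9308205 — 2 statements merged into one kernel-verified Lean document; each statement's English description precedes it below -/
import Mathlib

section
/- There exists a norm ‖·‖ on c₀₀ satisfying equation (1.1), i.e. ‖x‖ = max{ ‖x‖_∞, (∑_{k=1}^∞ ‖x‖_{n_k}²)^{1/2} } for every x ∈ c₀₀. Moreover this norm is 1-unconditional and subsymmetric — for every x = ∑_i a_i e_i ∈ c₀₀, all signs ε_i ∈ {−1,1} and all strictly increasing indices k₁ < k₂ < ⋯ one has ‖∑_i ε_i a_i e_{k_i}‖ = ‖∑_i a_i e_i‖ — and it satisfies ‖e_i‖ = 1 for all i and ‖x‖_∞ ≤ ‖x‖ ≤ ∑_i |x(i)| for all x ∈ c₀₀. -/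
/-!
The norm is obtained as the pointwise limit of the iterates `Φ^[m] ‖·‖₁`, where
`Φ N x = max ‖x‖_∞ (∑ₖ ‖x‖_{n_k,N}²)^{1/2}`. The operator `Φ` maps the class of
1-unconditional subsymmetric norms squeezed between `‖·‖_∞` and `‖·‖₁` into itself — the upper
bound because `‖x‖_{n_k,N} ≤ ‖x‖₁ / f(n_k)` and `∑ₖ f(n_k)⁻² ≤ 1` — and it is monotone in `N`,
so the iterates decrease pointwise. Each `‖x‖_{k,N}` is a maximum over the finitely many
successive families of subsets of the support of `x`, and the series is dominated by
`‖x‖₁² ∑ₖ f(n_k)⁻²`, so `Φ` commutes with the limit, which is therefore a fixed point of `Φ`,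
i.e. a solution of (1.1).
-/

open Finset

/-- `c₀₀`: finitely supported functions `ℕ → ℝ`. -/
abbrev C00 := ℕ →₀ ℝ

/-- `f(t) = log₂(1+t)`. -/
noncomputable def f (t : ℝ) : ℝ := Real.logb 2 (1 + t)

/-- `E < F` for finite sets: every element of `E` is less than every element of `F`. -/
def FinsetLT (E F : Finset ℕ) : Prop := ∀ i ∈ E, ∀ j ∈ F, i < j

/-- `Ex`: coordinatewise product of `x` with the indicator of `E`. -/
noncomputable def restr (E : Finset ℕ) (x : C00) : C00 := x.filter (· ∈ E)

/-- `N` is a norm on `c₀₀`. -/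
def IsNorm (N : C00 → ℝ) : Prop :=
  (∀ x y, N (x + y) ≤ N x + N y) ∧
  (∀ (c : ℝ) (x), N (c • x) = |c| * N x) ∧
  (∀ x, x ≠ 0 → 0 < N x)

/-- the sup norm `‖x‖_∞`. -/
noncomputable def supNorm (x : C00) : ℝ := ⨆ i, |x i|

/-- `‖x‖_k = sup{(1/f(k)) ∑_{i=1}^k ‖E_i x‖ : E₁ < ⋯ < E_k}`. -/
noncomputable def normK (N : C00 → ℝ) (k : ℕ) (x : C00) : ℝ :=
  sSup {r | ∃ E : Fin k → Finset ℕ,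
    (∀ i j : Fin k, i < j → FinsetLT (E i) (E j)) ∧
    r = (1 / f k) * ∑ i, N (restr (E i) x)}

/-- Equation (1.1): `‖x‖ = max{‖x‖_∞, (∑_k ‖x‖_{n_k}²)^{1/2}}`. -/
def Eq11 (nseq : ℕ → ℕ) (N : C00 → ℝ) : Prop :=
  ∀ x, N x = max (supNorm x) (Real.sqrt (∑' k, (normK N (nseq k) x) ^ 2))

open Filter Topology

lemma one_div_f_nonneg (n : ℕ) : 0 ≤ 1 / f n :=
  one_div_nonneg.2 <| Real.logb_nonneg one_lt_two (by simp)

section SquareSums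

variable {ι : Type*} {u v w : ι → ℝ}

lemma sq_le_self_of_tsum_le_one (hw0 : ∀ k, 0 ≤ w k) (hw : Summable w) (hw1 : ∑' k, w k ≤ 1)
    (k : ι) : w k ^ 2 ≤ w k := by
  have : w k ≤ 1 := (hw.le_tsum k fun j _ => hw0 j).trans hw1
  nlinarith [hw0 k]

lemma summable_sq_of_tsum_le_one (hw0 : ∀ k, 0 ≤ w k) (hw : Summable w) (hw1 : ∑' k, w k ≤ 1) :
    Summable fun k => w k ^ 2 :=
  hw.of_nonneg_of_le (fun _ => sq_nonneg _) (sq_le_self_of_tsum_le_one hw0 hw hw1)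

lemma tsum_sq_le_one (hw0 : ∀ k, 0 ≤ w k) (hw : Summable w) (hw1 : ∑' k, w k ≤ 1) :
    ∑' k, w k ^ 2 ≤ 1 :=
  (Summable.tsum_le_tsum (sq_le_self_of_tsum_le_one hw0 hw hw1)
    (summable_sq_of_tsum_le_one hw0 hw hw1) hw).trans hw1

lemma sqrt_tsum_sq_le_of_le (hu : ∀ k, 0 ≤ u k) (huv : ∀ k, u k ≤ v k)
    (hv : Summable fun k => v k ^ 2) : √(∑' k, u k ^ 2) ≤ √(∑' k, v k ^ 2) := by
  have hsq : ∀ k, u k ^ 2 ≤ v k ^ 2 := fun k => pow_le_pow_left₀ (hu k) (huv k) 2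
  exact Real.sqrt_le_sqrt <|
    Summable.tsum_le_tsum hsq (hv.of_nonneg_of_le (fun _ => sq_nonneg _) hsq) hv

lemma sqrt_tsum_sq_le_add (hw : ∀ k, 0 ≤ w k) (hwuv : ∀ k, w k ≤ u k + v k)
    (hu0 : ∀ k, 0 ≤ u k) (hv0 : ∀ k, 0 ≤ v k)
    (hu : Summable fun k => u k ^ 2) (hv : Summable fun k => v k ^ 2) :
    √(∑' k, w k ^ 2) ≤ √(∑' k, u k ^ 2) + √(∑' k, v k ^ 2) := by
  have hu' : Summable fun k => u k ^ (2 : ℝ) := by simpa only [Real.rpow_two] using hu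
  have hv' : Summable fun k => v k ^ (2 : ℝ) := by simpa only [Real.rpow_two] using hv
  obtain ⟨huv, hmink⟩ := Real.Lp_add_le_tsum_of_nonneg one_le_two hu0 hv0 hu' hv'
  simp only [Real.rpow_two, ← Real.sqrt_eq_rpow] at huv hmink
  exact (sqrt_tsum_sq_le_of_le hw hwuv huv).trans hmink

end SquareSums

noncomputable def l1Norm (x : C00) : ℝ := ∑ i ∈ x.support, |x i|

lemma l1Norm_nonneg (x : C00) : 0 ≤ l1Norm x := sum_nonneg fun i _ => abs_nonneg (x i)

lemma l1Norm_eq_sum_of_support_subset {x : C00} {T : Finset ℕ} (h : x.support ⊆ T) :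
    l1Norm x = ∑ i ∈ T, |x i| :=
  sum_subset h fun a _ ha => by rw [Finsupp.notMem_support_iff.mp ha, abs_zero]

lemma abs_le_l1Norm (x : C00) (i : ℕ) : |x i| ≤ l1Norm x := by
  rw [l1Norm_eq_sum_of_support_subset (subset_insert i x.support)]
  exact single_le_sum (fun j _ => abs_nonneg (x j)) (mem_insert_self i _)

lemma l1Norm_add_le (x y : C00) : l1Norm (x + y) ≤ l1Norm x + l1Norm y := by
  rw [l1Norm_eq_sum_of_support_subset Finsupp.support_add,
    l1Norm_eq_sum_of_support_subset (subset_union_left : x.support ⊆ _),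
    l1Norm_eq_sum_of_support_subset (subset_union_right : y.support ⊆ _), ← sum_add_distrib]
  exact sum_le_sum fun i _ => abs_add_le _ _

lemma l1Norm_smul (c : ℝ) (x : C00) : l1Norm (c • x) = |c| * l1Norm x := by
  rw [l1Norm_eq_sum_of_support_subset Finsupp.support_smul, l1Norm, mul_sum]
  simp only [Finsupp.smul_apply, smul_eq_mul, abs_mul]

lemma l1Norm_single (i : ℕ) : l1Norm (Finsupp.single i 1) = 1 := by
  simp [l1Norm, Finsupp.support_single]

lemma abs_le_supNorm (x : C00) (i : ℕ) : |x i| ≤ supNorm x :=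
  le_ciSup ⟨l1Norm x, Set.forall_mem_range.2 (abs_le_l1Norm x)⟩ i

lemma supNorm_le {x : C00} {c : ℝ} (h : ∀ i, |x i| ≤ c) : supNorm x ≤ c := ciSup_le h

lemma supNorm_nonneg (x : C00) : 0 ≤ supNorm x := (abs_nonneg _).trans (abs_le_supNorm x 0)

lemma supNorm_le_l1Norm (x : C00) : supNorm x ≤ l1Norm x := supNorm_le (abs_le_l1Norm x)

lemma supNorm_pos {x : C00} (hx : x ≠ 0) : 0 < supNorm x := by
  obtain ⟨i, hi⟩ := Finsupp.ne_iff.mp hx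
  exact (abs_pos.mpr hi).trans_le (abs_le_supNorm x i)

lemma supNorm_add_le (x y : C00) : supNorm (x + y) ≤ supNorm x + supNorm y :=
  supNorm_le fun i => (abs_add_le _ _).trans (add_le_add (abs_le_supNorm x i) (abs_le_supNorm y i))

lemma supNorm_smul (c : ℝ) (x : C00) : supNorm (c • x) = |c| * supNorm x := by
  simp only [supNorm, Finsupp.smul_apply, smul_eq_mul, abs_mul]
  exact (Real.mul_iSup_of_nonneg (abs_nonneg c) _).symm

lemma supNorm_single (i : ℕ) : supNorm (Finsupp.single i 1) = 1 :=
  le_antisymm ((supNorm_le_l1Norm _).trans (l1Norm_single i).le)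
    (by simpa using abs_le_supNorm (Finsupp.single i 1) i)

lemma restr_apply (E : Finset ℕ) (x : C00) (a : ℕ) :
    restr E x a = if a ∈ E then x a else 0 := Finsupp.filter_apply _ _ _

lemma restr_inter_support (E : Finset ℕ) (x : C00) : restr (E ∩ x.support) x = restr E x := by
  ext a
  by_cases ha : x a = 0 <;> simp [restr_apply, ha]

def Successive {k : ℕ} (E : Fin k → Finset ℕ) : Prop :=
  ∀ i j : Fin k, i < j → FinsetLT (E i) (E j)

lemma Successive.mono {k : ℕ} {E F : Fin k → Finset ℕ} (hE : Successive E) (hFE : ∀ i, F i ⊆ E i) :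
    Successive F :=
  fun i j hij a ha b hb => hE i j hij a (hFE i ha) b (hFE j hb)

lemma successive_empty (k : ℕ) : Successive fun _ : Fin k => (∅ : Finset ℕ) :=
  fun _ _ _ a ha => absurd ha (notMem_empty a)

lemma Successive.disjoint {k : ℕ} {E : Fin k → Finset ℕ} (hE : Successive E) {i j : Fin k}
    (hij : i ≠ j) : Disjoint (E i) (E j) := by
  rw [Finset.disjoint_left]
  intro a hai haj
  rcases hij.lt_or_gt with h | h
  · exact lt_irrefl a (hE i j h a hai a haj)
  · exact lt_irrefl a (hE j i h a haj a hai)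

lemma sum_l1Norm_restr_le {k : ℕ} {E : Fin k → Finset ℕ} (hE : Successive E) (x : C00) :
    ∑ i, l1Norm (restr (E i) x) ≤ l1Norm x := by
  have hrestr : ∀ i, l1Norm (restr (E i) x) = ∑ a ∈ E i ∩ x.support, |x a| := fun i => by
    rw [l1Norm_eq_sum_of_support_subset (T := E i ∩ x.support)]
    · refine sum_congr rfl fun a ha => ?_
      rw [restr_apply, if_pos (mem_inter.mp ha).1]
    · intro a ha
      rw [Finsupp.mem_support_iff, restr_apply] at ha
      split_ifs at ha with h
      · exact mem_inter.mpr ⟨h, Finsupp.mem_support_iff.mpr ha⟩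
      · exact absurd rfl ha
  calc ∑ i, l1Norm (restr (E i) x)
      = ∑ a ∈ univ.biUnion fun i => E i ∩ x.support, |x a| := by
        rw [sum_biUnion fun i _ j _ hij => (hE.disjoint hij).mono inter_subset_left
          inter_subset_left]
        exact sum_congr rfl fun i _ => hrestr i
    _ ≤ l1Norm x :=
        sum_le_sum_of_subset_of_nonneg (biUnion_subset.mpr fun _ _ => inter_subset_right)
          fun _ _ _ => abs_nonneg _

noncomputable def spread (ε : ℕ → ℝ) (κ : ℕ → ℕ) (x : C00) : C00 :=
  ∑ i ∈ x.support, (ε i * x i) • Finsupp.single (κ i) (1 : ℝ)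

section Spread

variable {ε : ℕ → ℝ} {κ : ℕ → ℕ}

lemma spread_apply (x : C00) (a : ℕ) :
    spread ε κ x a = ∑ i ∈ x.support, if κ i = a then ε i * x i else 0 := by
  simp only [spread, Finsupp.finsetSum_apply, Finsupp.smul_apply, Finsupp.single_apply,
    smul_eq_mul, mul_ite, mul_one, mul_zero]

lemma spread_apply_apply (hκ : Function.Injective κ) (x : C00) (i : ℕ) :
    spread ε κ x (κ i) = ε i * x i := by
  rw [spread_apply]
  simp_rw [hκ.eq_iff]
  rw [sum_ite_eq']
  split_ifs with hi
  · rfl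
  · rw [Finsupp.notMem_support_iff.mp hi, mul_zero]

lemma spread_apply_of_forall_ne {a : ℕ} (ha : ∀ i, κ i ≠ a) (x : C00) : spread ε κ x a = 0 := by
  rw [spread_apply]
  exact sum_eq_zero fun i _ => if_neg (ha i)

lemma support_spread_subset (x : C00) : (spread ε κ x).support ⊆ x.support.image κ := by
  intro a ha
  rw [Finsupp.mem_support_iff, spread_apply] at ha
  obtain ⟨i, hi, hne⟩ := exists_ne_zero_of_sum_ne_zero ha
  exact mem_image.mpr ⟨i, hi, by_contra fun h => hne (if_neg h)⟩

lemma restr_spread (hκ : Function.Injective κ) (E : Finset ℕ) (x : C00) :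
    restr E (spread ε κ x) = spread ε κ (restr (E.preimage κ hκ.injOn) x) := by
  ext a
  by_cases ha : ∃ i, κ i = a
  · obtain ⟨i, rfl⟩ := ha
    simp only [restr_apply, spread_apply_apply hκ, mem_preimage]
    split_ifs <;> simp
  · push Not at ha
    rw [restr_apply, spread_apply_of_forall_ne ha, spread_apply_of_forall_ne ha, ite_self]

variable (hε : ∀ i, |ε i| = 1) (hκ : Function.Injective κ)
include hε hκ

lemma abs_spread_apply_apply (x : C00) (i : ℕ) : |spread ε κ x (κ i)| = |x i| := by
  rw [spread_apply_apply hκ, abs_mul, hε, one_mul]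

lemma l1Norm_spread (x : C00) : l1Norm (spread ε κ x) = l1Norm x := by
  rw [l1Norm_eq_sum_of_support_subset (support_spread_subset x), sum_image hκ.injOn]
  exact sum_congr rfl fun i _ => abs_spread_apply_apply hε hκ x i

lemma supNorm_spread (x : C00) : supNorm (spread ε κ x) = supNorm x := by
  refine le_antisymm (supNorm_le fun a => ?_)
    (supNorm_le fun i => abs_spread_apply_apply hε hκ x i ▸ abs_le_supNorm _ _)
  by_cases ha : ∃ i, κ i = a
  · obtain ⟨i, rfl⟩ := ha
    exact abs_spread_apply_apply hε hκ x i ▸ abs_le_supNorm x i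
  · push Not at ha
    rw [spread_apply_of_forall_ne ha, abs_zero]
    exact supNorm_nonneg x

end Spread

lemma Successive.preimage {k : ℕ} {E : Fin k → Finset ℕ} (hE : Successive E) {κ : ℕ → ℕ}
    (hκ : StrictMono κ) : Successive fun j => (E j).preimage κ hκ.injective.injOn :=
  fun i j hij _ ha _ hb =>
    hκ.lt_iff_lt.mp (hE i j hij _ (mem_preimage.mp ha) _ (mem_preimage.mp hb))

lemma Successive.image {k : ℕ} {E : Fin k → Finset ℕ} (hE : Successive E) {κ : ℕ → ℕ}
    (hκ : StrictMono κ) : Successive fun j => (E j).image κ := by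
  intro i j hij _ ha' _ hb'
  obtain ⟨a, ha, rfl⟩ := mem_image.mp ha'
  obtain ⟨b, hb, rfl⟩ := mem_image.mp hb'
  exact hκ (hE i j hij a ha b hb)

noncomputable def blockSum (N : C00 → ℝ) (k : ℕ) (x : C00) (E : Fin k → Finset ℕ) : ℝ :=
  (1 / f k) * ∑ i, N (restr (E i) x)

open scoped Classical in
noncomputable def supportChains (k : ℕ) (x : C00) : Finset (Fin k → Finset ℕ) :=
  {E ∈ Fintype.piFinset fun _ => x.support.powerset | Successive E}

section NormK

variable {N M : C00 → ℝ} {k : ℕ} {x : C00}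

lemma mem_supportChains {E : Fin k → Finset ℕ} :
    E ∈ supportChains k x ↔ (∀ i, E i ⊆ x.support) ∧ Successive E := by
  simp [supportChains, Fintype.mem_piFinset]

lemma supportChains_nonempty (k : ℕ) (x : C00) : (supportChains k x).Nonempty :=
  ⟨_, mem_supportChains.2 ⟨fun _ => empty_subset _, successive_empty k⟩⟩

lemma Successive.inter_support_mem_supportChains {E : Fin k → Finset ℕ} (hE : Successive E) :
    (fun i => E i ∩ x.support) ∈ supportChains k x :=
  mem_supportChains.2 ⟨fun _ => inter_subset_right, hE.mono fun _ => inter_subset_left⟩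

lemma blockSum_inter_support (E : Fin k → Finset ℕ) :
    blockSum N k x (fun i => E i ∩ x.support) = blockSum N k x E := by
  simp only [blockSum, restr_inter_support]

lemma normK_eq_sup' (N : C00 → ℝ) (k : ℕ) (x : C00) :
    normK N k x = (supportChains k x).sup' (supportChains_nonempty k x) (blockSum N k x) := by
  rw [normK, sup'_eq_csSup_image]
  congr 1
  ext r
  constructor
  · rintro ⟨E, hE, rfl⟩
    exact ⟨_, Successive.inter_support_mem_supportChains hE, blockSum_inter_support E⟩
  · rintro ⟨E, hE, rfl⟩
    exact ⟨E, (mem_supportChains.1 hE).2, rfl⟩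

lemma le_normK {E : Fin k → Finset ℕ} (hE : Successive E) : blockSum N k x E ≤ normK N k x := by
  rw [normK_eq_sup', ← blockSum_inter_support]
  exact le_sup' (blockSum N k x) hE.inter_support_mem_supportChains

lemma normK_le {c : ℝ} (h : ∀ E : Fin k → Finset ℕ, Successive E → blockSum N k x E ≤ c) :
    normK N k x ≤ c := by
  rw [normK_eq_sup']
  exact sup'_le _ _ fun E hE => h E (mem_supportChains.1 hE).2

lemma normK_nonneg (hN : ∀ y, 0 ≤ N y) : 0 ≤ normK N k x :=
  (mul_nonneg (one_div_f_nonneg k) (sum_nonneg fun _ _ => hN _)).trans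
    (le_normK (successive_empty k))

lemma normK_mono (h : ∀ y, N y ≤ M y) : normK N k x ≤ normK M k x :=
  normK_le fun _ hE => (mul_le_mul_of_nonneg_left (sum_le_sum fun _ _ => h _)
    (one_div_f_nonneg k)).trans (le_normK hE)

lemma normK_le_mul_l1Norm (hN : ∀ y, N y ≤ l1Norm y) : normK N k x ≤ 1 / f k * l1Norm x :=
  normK_le fun _ hE => mul_le_mul_of_nonneg_left
    ((sum_le_sum fun _ _ => hN _).trans (sum_l1Norm_restr_le hE x)) (one_div_f_nonneg k)

lemma normK_add_le (hN : ∀ y z, N (y + z) ≤ N y + N z) (x y : C00) :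
    normK N k (x + y) ≤ normK N k x + normK N k y := by
  refine normK_le fun E hE => ?_
  calc blockSum N k (x + y) E ≤ blockSum N k x E + blockSum N k y E := by
        simp only [blockSum, restr, Finsupp.filter_add, ← mul_add, ← sum_add_distrib]
        exact mul_le_mul_of_nonneg_left (sum_le_sum fun _ _ => hN _ _) (one_div_f_nonneg k)
    _ ≤ normK N k x + normK N k y := add_le_add (le_normK hE) (le_normK hE)

lemma normK_smul (hN : ∀ (c : ℝ) y, N (c • y) = |c| * N y) (c : ℝ) (x : C00) :
    normK N k (c • x) = |c| * normK N k x := by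
  have hblock : ∀ E, blockSum N k (c • x) E = |c| * blockSum N k x E := fun E => by
    simp only [blockSum, restr, Finsupp.filter_smul, hN, ← mul_sum]
    ring
  refine le_antisymm (normK_le fun E hE => hblock E ▸
    mul_le_mul_of_nonneg_left (le_normK hE) (abs_nonneg c)) ?_
  rcases eq_or_ne c 0 with rfl | hc
  · have h0 := le_normK (N := N) (x := (0 : ℝ) • x) (successive_empty k)
    rw [hblock, abs_zero, zero_mul] at h0
    rwa [abs_zero, zero_mul]
  · rw [← le_div_iff₀' (abs_pos.2 hc)]
    exact normK_le fun E hE => by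
      rw [le_div_iff₀' (abs_pos.2 hc), ← hblock]
      exact le_normK hE

lemma normK_spread {ε : ℕ → ℝ} {κ : ℕ → ℕ} (hκ : StrictMono κ)
    (hN : ∀ y, N (spread ε κ y) = N y) (x : C00) : normK N k (spread ε κ x) = normK N k x := by
  have hblock : ∀ E, blockSum N k (spread ε κ x) E =
      blockSum N k x fun j => (E j).preimage κ hκ.injective.injOn := fun E => by
    simp only [blockSum, restr_spread hκ.injective, hN]
  refine le_antisymm (normK_le fun E hE => (hblock E).trans_le (le_normK (hE.preimage hκ)))
    (normK_le fun E hE => ?_)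
  have hpre : ∀ j, ((E j).image κ).preimage κ hκ.injective.injOn = E j := fun j => by
    ext a
    simp [hκ.injective.eq_iff]
  simpa only [hblock, hpre] using le_normK (N := N) (x := spread ε κ x) (hE.image hκ)

lemma tendsto_normK {N : ℕ → C00 → ℝ} (h : ∀ y, Tendsto (fun m => N m y) atTop (𝓝 (M y))) :
    Tendsto (fun m => normK (N m) k x) atTop (𝓝 (normK M k x)) := by
  simp only [normK_eq_sup']
  exact Tendsto.finset_sup'_nhds_apply _ fun E _ =>
    (tendsto_finsetSum _ fun i _ => h (restr (E i) x)).const_mul _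

end NormK

structure IsSubsymmetricNorm (N : C00 → ℝ) : Prop where
  supNorm_le : ∀ x, supNorm x ≤ N x
  le_l1Norm : ∀ x, N x ≤ l1Norm x
  add_le : ∀ x y, N (x + y) ≤ N x + N y
  smul_eq : ∀ (c : ℝ) x, N (c • x) = |c| * N x
  spread_eq : ∀ (x : C00) (ε : ℕ → ℝ) (κ : ℕ → ℕ), (∀ i, |ε i| = 1) → StrictMono κ →
    N (spread ε κ x) = N x

namespace IsSubsymmetricNorm

variable {N : C00 → ℝ}

lemma nonneg (hN : IsSubsymmetricNorm N) (x : C00) : 0 ≤ N x :=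
  (supNorm_nonneg x).trans (hN.supNorm_le x)

lemma isNorm (hN : IsSubsymmetricNorm N) : IsNorm N :=
  ⟨hN.add_le, hN.smul_eq, fun x hx => (supNorm_pos hx).trans_le (hN.supNorm_le x)⟩

lemma apply_single (hN : IsSubsymmetricNorm N) (i : ℕ) : N (Finsupp.single i 1) = 1 :=
  le_antisymm ((hN.le_l1Norm _).trans (l1Norm_single i).le)
    ((supNorm_single i).symm.le.trans (hN.supNorm_le _))

lemma of_tendsto {Ns : ℕ → C00 → ℝ} (hNs : ∀ m, IsSubsymmetricNorm (Ns m))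
    (h : ∀ x, Tendsto (fun m => Ns m x) atTop (𝓝 (N x))) : IsSubsymmetricNorm N where
  supNorm_le x := ge_of_tendsto' (h x) fun m => (hNs m).supNorm_le x
  le_l1Norm x := le_of_tendsto' (h x) fun m => (hNs m).le_l1Norm x
  add_le x y := le_of_tendsto_of_tendsto' (h (x + y)) ((h x).add (h y)) fun m => (hNs m).add_le x y
  smul_eq c x := tendsto_nhds_unique (h (c • x)) <| by
    simpa only [(hNs _).smul_eq] using (h x).const_mul |c|
  spread_eq x ε κ hε hκ := tendsto_nhds_unique (h (spread ε κ x)) <| by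
    simpa only [(hNs _).spread_eq x ε κ hε hκ] using h x

end IsSubsymmetricNorm

lemma isSubsymmetricNorm_l1Norm : IsSubsymmetricNorm l1Norm where
  supNorm_le := supNorm_le_l1Norm
  le_l1Norm _ := le_rfl
  add_le := l1Norm_add_le
  smul_eq := l1Norm_smul
  spread_eq x _ _ hε hκ := l1Norm_spread hε hκ.injective x

lemma IsSubsymmetricNorm.normK_sq_le {N : C00 → ℝ} (hN : IsSubsymmetricNorm N) (k : ℕ) (x : C00) :
    normK N k x ^ 2 ≤ (1 / f k) ^ 2 * l1Norm x ^ 2 := by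
  rw [← mul_pow]
  exact pow_le_pow_left₀ (normK_nonneg hN.nonneg) (normK_le_mul_l1Norm hN.le_l1Norm) 2

section Phi

variable (nseq : ℕ → ℕ)

noncomputable def Phi (N : C00 → ℝ) (x : C00) : ℝ :=
  max (supNorm x) (√(∑' k, normK N (nseq k) x ^ 2))

variable {nseq} {N M : C00 → ℝ} (hsq : Summable fun k => (1 / f (nseq k)) ^ 2)
include hsq

lemma summable_normK_sq (hN : IsSubsymmetricNorm N) (x : C00) :
    Summable fun k => normK N (nseq k) x ^ 2 :=
  (hsq.mul_right _).of_nonneg_of_le (fun _ => sq_nonneg _) fun _ => hN.normK_sq_le _ x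

lemma Phi_mono (hN : IsSubsymmetricNorm N) (hM : IsSubsymmetricNorm M) (h : ∀ y, N y ≤ M y)
    (x : C00) : Phi nseq N x ≤ Phi nseq M x :=
  max_le_max le_rfl <| sqrt_tsum_sq_le_of_le (fun _ => normK_nonneg hN.nonneg)
    (fun _ => normK_mono h) (summable_normK_sq hsq hM x)

lemma tendsto_Phi {Ns : ℕ → C00 → ℝ} (hNs : ∀ m, IsSubsymmetricNorm (Ns m))
    (h : ∀ y, Tendsto (fun m => Ns m y) atTop (𝓝 (N y))) (x : C00) :
    Tendsto (fun m => Phi nseq (Ns m) x) atTop (𝓝 (Phi nseq N x)) :=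
  tendsto_const_nhds.max <| (Real.continuous_sqrt.tendsto _).comp <|
    tendsto_tsum_of_dominated_convergence (hsq.mul_right (l1Norm x ^ 2))
      (fun _ => (tendsto_normK h).pow 2) <| Eventually.of_forall fun m _ => by
        rw [Real.norm_eq_abs, abs_sq]
        exact (hNs m).normK_sq_le _ x

variable (hle : ∑' k, (1 / f (nseq k)) ^ 2 ≤ 1)
include hle

lemma sqrt_tsum_normK_sq_le (hN : IsSubsymmetricNorm N) (x : C00) :
    √(∑' k, normK N (nseq k) x ^ 2) ≤ l1Norm x := by
  have hsum : ∑' k, normK N (nseq k) x ^ 2 ≤ l1Norm x ^ 2 :=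
    calc ∑' k, normK N (nseq k) x ^ 2 ≤ ∑' k, (1 / f (nseq k)) ^ 2 * l1Norm x ^ 2 :=
          Summable.tsum_le_tsum (fun _ => hN.normK_sq_le _ x) (summable_normK_sq hsq hN x)
            (hsq.mul_right _)
      _ = (∑' k, (1 / f (nseq k)) ^ 2) * l1Norm x ^ 2 := tsum_mul_right
      _ ≤ l1Norm x ^ 2 := mul_le_of_le_one_left (sq_nonneg _) hle
  exact (Real.sqrt_le_sqrt hsum).trans_eq (Real.sqrt_sq (l1Norm_nonneg x))

lemma isSubsymmetricNorm_Phi (hN : IsSubsymmetricNorm N) : IsSubsymmetricNorm (Phi nseq N) where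
  supNorm_le _ := le_max_left _ _
  le_l1Norm x := max_le (supNorm_le_l1Norm x) (sqrt_tsum_normK_sq_le hsq hle hN x)
  add_le x y := max_le
    ((supNorm_add_le x y).trans (add_le_add (le_max_left _ _) (le_max_left _ _)))
    ((sqrt_tsum_sq_le_add (fun _ => normK_nonneg hN.nonneg) (fun _ => normK_add_le hN.add_le x y)
      (fun _ => normK_nonneg hN.nonneg) (fun _ => normK_nonneg hN.nonneg)
      (summable_normK_sq hsq hN x) (summable_normK_sq hsq hN y)).trans
      (add_le_add (le_max_right _ _) (le_max_right _ _)))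
  smul_eq c x := by
    simp only [Phi, normK_smul hN.smul_eq, mul_pow, sq_abs, tsum_mul_left,
      Real.sqrt_mul (sq_nonneg c), Real.sqrt_sq_eq_abs, supNorm_smul,
      mul_max_of_nonneg _ _ (abs_nonneg c)]
  spread_eq x ε κ hε hκ := by
    simp only [Phi, supNorm_spread hε hκ.injective,
      normK_spread hκ fun y => hN.spread_eq y ε κ hε hκ]

lemma isSubsymmetricNorm_iterate_Phi (m : ℕ) : IsSubsymmetricNorm ((Phi nseq)^[m] l1Norm) := by
  induction m with
  | zero => exact isSubsymmetricNorm_l1Norm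
  | succ m ih => simpa only [Function.iterate_succ_apply'] using isSubsymmetricNorm_Phi hsq hle ih

lemma antitone_iterate_Phi (x : C00) : Antitone fun m => (Phi nseq)^[m] l1Norm x := by
  refine antitone_nat_of_succ_le fun m => ?_
  induction m generalizing x with
  | zero =>
    exact max_le (supNorm_le_l1Norm x) (sqrt_tsum_normK_sq_le hsq hle isSubsymmetricNorm_l1Norm x)
  | succ m ih =>
    calc (Phi nseq)^[m + 2] l1Norm x = Phi nseq ((Phi nseq)^[m + 1] l1Norm) x := by
          rw [Function.iterate_succ_apply']
      _ ≤ Phi nseq ((Phi nseq)^[m] l1Norm) x :=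
          Phi_mono hsq (isSubsymmetricNorm_iterate_Phi hsq hle _)
            (isSubsymmetricNorm_iterate_Phi hsq hle _) ih x
      _ = (Phi nseq)^[m + 1] l1Norm x := by rw [Function.iterate_succ_apply']

end Phi

noncomputable def fixedNorm (nseq : ℕ → ℕ) (x : C00) : ℝ := ⨅ m, (Phi nseq)^[m] l1Norm x

section FixedNorm

variable {nseq : ℕ → ℕ} (hsq : Summable fun k => (1 / f (nseq k)) ^ 2)
  (hle : ∑' k, (1 / f (nseq k)) ^ 2 ≤ 1)
include hsq hle

lemma tendsto_iterate_Phi (x : C00) :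
    Tendsto (fun m => (Phi nseq)^[m] l1Norm x) atTop (𝓝 (fixedNorm nseq x)) :=
  tendsto_atTop_ciInf (antitone_iterate_Phi hsq hle x)
    ⟨0, Set.forall_mem_range.2 fun m => (isSubsymmetricNorm_iterate_Phi hsq hle m).nonneg x⟩

lemma isSubsymmetricNorm_fixedNorm : IsSubsymmetricNorm (fixedNorm nseq) :=
  .of_tendsto (isSubsymmetricNorm_iterate_Phi hsq hle) (tendsto_iterate_Phi hsq hle)

lemma Phi_fixedNorm (x : C00) : Phi nseq (fixedNorm nseq) x = fixedNorm nseq x := by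
  refine tendsto_nhds_unique (tendsto_Phi hsq (isSubsymmetricNorm_iterate_Phi hsq hle)
    (tendsto_iterate_Phi hsq hle) x) ?_
  simpa only [Function.comp_def, Function.iterate_succ_apply'] using
    (tendsto_iterate_Phi hsq hle x).comp (tendsto_add_atTop_nat 1)

end FixedNorm

theorem statement0_general (nseq : ℕ → ℕ)
    (hsumm : Summable fun k => 1 / f (nseq k))
    (hsum : (∑' k, 1 / f (nseq k)) < 1 / 10) :
    ∃ N : C00 → ℝ, IsNorm N ∧ Eq11 nseq N ∧
      (∀ (x : C00) (ε : ℕ → ℝ) (κ : ℕ → ℕ), (∀ i, ε i = 1 ∨ ε i = -1) → StrictMono κ →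
        N (∑ i ∈ x.support, (ε i * x i) • Finsupp.single (κ i) (1 : ℝ)) = N x) ∧
      (∀ i, N (Finsupp.single i (1 : ℝ)) = 1) ∧
      (∀ x, supNorm x ≤ N x ∧ N x ≤ ∑ i ∈ x.support, |x i|) := by
  have hw0 : ∀ k, 0 ≤ 1 / f (nseq k) := fun k => one_div_f_nonneg _
  have hw1 : ∑' k, 1 / f (nseq k) ≤ 1 := by linarith
  have hsq := summable_sq_of_tsum_le_one hw0 hsumm hw1
  have hle := tsum_sq_le_one hw0 hsumm hw1
  have hN := isSubsymmetricNorm_fixedNorm hsq hle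
  refine ⟨fixedNorm nseq, hN.isNorm, fun x => (Phi_fixedNorm hsq hle x).symm,
    fun x ε κ hε hκ => hN.spread_eq x ε κ (fun i => (abs_eq zero_le_one).2 (hε i)) hκ,
    hN.apply_single, fun x => ⟨hN.supNorm_le x, hN.le_l1Norm x⟩⟩

/-- existence of a 1-unconditional subsymmetric norm satisfying (1.1). -/
theorem statement0 (nseq : ℕ → ℕ) (hmono : StrictMono nseq) (hpos : ∀ k, 0 < nseq k)
    (hsumm : Summable fun k => 1 / f (nseq k))
    (hsum : (∑' k, 1 / f (nseq k)) < 1 / 10) :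
    ∃ N : C00 → ℝ, IsNorm N ∧ Eq11 nseq N ∧
      (∀ (x : C00) (ε : ℕ → ℝ) (κ : ℕ → ℕ), (∀ i, ε i = 1 ∨ ε i = -1) → StrictMono κ →
        N (∑ i ∈ x.support, (ε i * x i) • Finsupp.single (κ i) (1 : ℝ)) = N x) ∧
      (∀ i, N (Finsupp.single i (1 : ℝ)) = 1) ∧
      (∀ x, supNorm x ≤ N x ∧ N x ≤ ∑ i ∈ x.support, |x i|) :=
  statement0_general nseq hsumm hsum
end

section
/- Let m ≤ n be positive integers and let y₁, …, y_m ∈ ℝ^n (with the supremum norm ‖·‖_∞) be 1-unconditional, meaning ‖∑_{k=1}^m ε_k b_k y_k‖_∞ = ‖∑_{k=1}^m b_k y_k‖_∞ for all scalars (b_k) and all signs ε_k ∈ {−1,1}. Write y_k = ∑_{j=1}^n a_{k,j} f_j where (f_j) is the unit vector basis of ℝ^n. Then the matrices x_k = ∑_{j=1}^n a_{k,j} e_{k,j} (k = 1,…,m), where e_{i,j} are the matrix units of the n×n real matrices normed as linear operators on (ℝ^n, ‖·‖_∞), form a block basis of the lexicographically ordered matrix basis (e_{1,1}, e_{1,2},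 …, e_{1,n}, e_{2,1}, …, e_{n,n}), and for all scalars (b_k)_{k=1}^m the operator norm satisfies ‖∑_{k=1}^m b_k x_k‖ = max_{j≤n} ∑_{k=1}^m |b_k a_{k,j}| = ‖∑_{k=1}^m b_k y_k‖_∞; in particular (x_k)_{k=1}^m is isometrically equivalent to (y_k)_{k=1}^m. -/
/-!
Both norms equal `max_j ∑_k |b_k a_{k,j}|`. The `j`-th coordinate of `∑ ε_k b_k y_k` attains this
value when the signs `ε_k` match those of `b_k a_{k,j}`, and unconditionality removes the signs.
The operator `∑ b_k x_k` sends `v` to `(∑_k b_k a_{k,j} v_k)_j`, an `ℓ_∞`-operator whose norm is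
its largest absolute row sum, attained at a sign vector. Each `x_k` is supported on the units
`e_{k,·}`, so the `x_k` are successive in the lexicographic order.
-/

open Finset

/-- The matrix unit `e_{i,j}` as an operator on `ℝ^n` with the sup norm:
`e_{i,j} v = v_i • f_j`. -/
noncomputable def matUnit (n : ℕ) (i j : Fin n) : (Fin n → ℝ) →L[ℝ] (Fin n → ℝ) :=
  (ContinuousLinearMap.proj i).smulRight (Pi.single j 1)

theorem exists_eq_one_or_neg_one_mul_eq_abs (r : ℝ) :
    ∃ ε : ℝ, (ε = 1 ∨ ε = -1) ∧ ε * r = |r| := by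
  rcases le_or_gt 0 r with hr | hr
  · exact ⟨1, .inl rfl, by rw [one_mul, abs_of_nonneg hr]⟩
  · exact ⟨-1, .inr rfl, by rw [neg_one_mul, abs_of_neg hr]⟩

section RowSums

variable {ι κ : Type*} [Fintype ι] [Fintype κ]

theorem norm_sum_smul_le_iSup_sum_abs (y : κ → ι → ℝ) (b : κ → ℝ) :
    ‖∑ k, b k • y k‖ ≤ ⨆ j, ∑ k, |b k * y k j| := by
  refine (pi_norm_le_iff_of_nonneg <| Real.iSup_nonneg fun j ↦ by positivity).2 fun j ↦ ?_
  calc ‖(∑ k, b k • y k) j‖ = |∑ k, b k * y k j| := by simp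
    _ ≤ ∑ k, |b k * y k j| := abs_sum_le_sum_abs _ _
    _ ≤ ⨆ j, ∑ k, |b k * y k j| :=
      le_ciSup (f := fun j ↦ ∑ k, |b k * y k j|) (Set.finite_range _).bddAbove j

theorem sum_abs_le_norm_sum_smul_of_unconditional {y : κ → ι → ℝ}
    (hunc : ∀ (b ε : κ → ℝ), (∀ k, ε k = 1 ∨ ε k = -1) →
      ‖∑ k, (ε k * b k) • y k‖ = ‖∑ k, b k • y k‖) (b : κ → ℝ) (j : ι) :
    ∑ k, |b k * y k j| ≤ ‖∑ k, b k • y k‖ := by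
  choose ε hε_sign hε using fun k ↦ exists_eq_one_or_neg_one_mul_eq_abs (b k * y k j)
  calc ∑ k, |b k * y k j| = (∑ k, (ε k * b k) • y k) j := by
        simp only [Finset.sum_apply, Pi.smul_apply, smul_eq_mul, ← hε, mul_assoc]
    _ ≤ ‖∑ k, (ε k * b k) • y k‖ :=
      (le_abs_self _).trans (norm_le_pi_norm (∑ k, (ε k * b k) • y k) j)
    _ = ‖∑ k, b k • y k‖ := hunc b ε hε_sign

theorem norm_sum_smul_eq_iSup_sum_abs_of_unconditional {y : κ → ι → ℝ}
    (hunc : ∀ (b ε : κ → ℝ), (∀ k, ε k = 1 ∨ ε k = -1) →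
      ‖∑ k, (ε k * b k) • y k‖ = ‖∑ k, b k • y k‖) (b : κ → ℝ) :
    ‖∑ k, b k • y k‖ = ⨆ j, ∑ k, |b k * y k j| :=
  (norm_sum_smul_le_iSup_sum_abs y b).antisymm <|
    Real.iSup_le (sum_abs_le_norm_sum_smul_of_unconditional hunc b) (norm_nonneg _)

end RowSums

section OperatorNorm

variable {ι ι' κ : Type*} [Fintype ι] [Fintype ι'] [Fintype κ]

theorem opNorm_le_iSup_sum_abs {T : (ι → ℝ) →L[ℝ] (ι' → ℝ)} {σ : κ → ι} {c : κ → ι' → ℝ}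
    (hT : ∀ v j, T v j = ∑ k, c k j * v (σ k)) :
    ‖T‖ ≤ ⨆ j, ∑ k, |c k j| := by
  have hC : 0 ≤ ⨆ j, ∑ k, |c k j| := Real.iSup_nonneg fun j ↦ by positivity
  refine T.opNorm_le_bound hC fun v ↦ ?_
  refine (pi_norm_le_iff_of_nonneg (by positivity)).2 fun j ↦ ?_
  calc ‖T v j‖ = |∑ k, c k j * v (σ k)| := by rw [hT, Real.norm_eq_abs]
    _ ≤ ∑ k, |c k j| * ‖v‖ := by
      refine (abs_sum_le_sum_abs _ _).trans (sum_le_sum fun k _ ↦ ?_)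
      rw [abs_mul]
      exact mul_le_mul_of_nonneg_left (norm_le_pi_norm v (σ k)) (abs_nonneg _)
    _ ≤ (⨆ j, ∑ k, |c k j|) * ‖v‖ := by
      rw [← sum_mul]
      exact mul_le_mul_of_nonneg_right
        (le_ciSup (f := fun j ↦ ∑ k, |c k j|) (Set.finite_range _).bddAbove j) (norm_nonneg v)

theorem iSup_sum_abs_le_opNorm {T : (ι → ℝ) →L[ℝ] (ι' → ℝ)} {σ : κ → ι} (hσ : σ.Injective)
    {c : κ → ι' → ℝ} (hT : ∀ v j, T v j = ∑ k, c k j * v (σ k)) :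
    ⨆ j, ∑ k, |c k j| ≤ ‖T‖ := by
  refine Real.iSup_le (fun j ↦ ?_) (norm_nonneg T)
  choose ε hε_sign hε using fun k ↦ exists_eq_one_or_neg_one_mul_eq_abs (c k j)
  -- Injectivity of `σ` lets the signs be placed at the coordinates `σ k` simultaneously.
  set v : ι → ℝ := Function.extend σ ε 0
  have hv : ‖v‖ ≤ 1 := by
    refine (pi_norm_le_iff_of_nonneg zero_le_one).2 fun i ↦ ?_
    by_cases hi : ∃ k, σ k = i
    · obtain ⟨k, rfl⟩ := hi
      rcases hε_sign k with h | h <;> simp [v, hσ.extend_apply, h]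
    · simp [v, Function.extend_apply' _ _ _ hi]
  calc ∑ k, |c k j| = T v j := by
        simp only [hT, v, hσ.extend_apply, ← hε, mul_comm]
    _ ≤ ‖T v‖ := (le_abs_self _).trans (norm_le_pi_norm (T v) j)
    _ ≤ ‖T‖ := T.le_of_opNorm_le_of_le le_rfl hv |>.trans_eq (mul_one _)

theorem opNorm_eq_iSup_sum_abs {T : (ι → ℝ) →L[ℝ] (ι' → ℝ)} {σ : κ → ι} (hσ : σ.Injective)
    {c : κ → ι' → ℝ} (hT : ∀ v j, T v j = ∑ k, c k j * v (σ k)) :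
    ‖T‖ = ⨆ j, ∑ k, |c k j| :=
  (opNorm_le_iSup_sum_abs hT).antisymm (iSup_sum_abs_le_opNorm hσ hT)

end OperatorNorm

theorem sum_smul_sum_smul_matUnit_apply {κ : Type*} [Fintype κ] {n : ℕ} (σ : κ → Fin n)
    (y : κ → Fin n → ℝ) (b : κ → ℝ) (v : Fin n → ℝ) (l : Fin n) :
    (∑ k, b k • ∑ j, y k j • matUnit n (σ k) j) v l = ∑ k, b k * y k l * v (σ k) := by
  simp only [matUnit, _root_.sum_apply, smul_apply,
    ContinuousLinearMap.smulRight_apply, ContinuousLinearMap.proj_apply, Finset.sum_apply,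
    Pi.smul_apply, Pi.single_apply, smul_eq_mul, mul_ite, mul_one, mul_zero, Finset.sum_ite_eq,
    Finset.mem_univ, if_true, mul_assoc]

theorem statement6_general (m n : ℕ) (hmn : m ≤ n)
    (y : Fin m → Fin n → ℝ)
    (hunc : ∀ (b ε : Fin m → ℝ), (∀ k, ε k = 1 ∨ ε k = -1) →
      ‖∑ k, (ε k * b k) • y k‖ = ‖∑ k, b k • y k‖) :
    -- `x_k = ∑_j a_{k,j} e_{k,j}` form a block basis of the lexicographically
    -- ordered matrix basis `(e_{i,j})`:
    (∀ (k k' : Fin m) (j j' : Fin n), k < k' → y k j ≠ 0 → y k' j' ≠ 0 →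
      Prod.Lex (· < ·) (· < ·) (Fin.castLE hmn k, j) (Fin.castLE hmn k', j')) ∧
    -- and the operator norm satisfies
    -- `‖∑ b_k x_k‖ = max_{j ≤ n} ∑_k |b_k a_{k,j}| = ‖∑ b_k y_k‖_∞`:
    ∀ b : Fin m → ℝ,
      ‖∑ k, b k • ∑ j, y k j • matUnit n (Fin.castLE hmn k) j‖
        = (⨆ j : Fin n, ∑ k, |b k * y k j|) ∧
      ‖∑ k, b k • ∑ j, y k j • matUnit n (Fin.castLE hmn k) j‖
        = ‖∑ k, b k • y k‖ := by
  refine ⟨fun k k' j j' hk _ _ ↦ Prod.Lex.left _ _ hk, fun b ↦ ?_⟩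
  have hx : ‖∑ k, b k • ∑ j, y k j • matUnit n (Fin.castLE hmn k) j‖
      = ⨆ j, ∑ k, |b k * y k j| :=
    opNorm_eq_iSup_sum_abs (Fin.castLE_injective hmn)
      (sum_smul_sum_smul_matUnit_apply (Fin.castLE hmn) y b)
  exact ⟨hx, hx.trans (norm_sum_smul_eq_iSup_sum_abs_of_unconditional hunc b).symm⟩

/-- embedding a finite 1-unconditional sequence in `ℝ^n` (sup norm)
as a block basis of the lexicographically ordered matrix units of `B(ℓ_∞^n)`,
isometrically. -/
theorem statement6 (m n : ℕ) (hm : 0 < m) (hmn : m ≤ n)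
    (y : Fin m → Fin n → ℝ)
    (hunc : ∀ (b ε : Fin m → ℝ), (∀ k, ε k = 1 ∨ ε k = -1) →
      ‖∑ k, (ε k * b k) • y k‖ = ‖∑ k, b k • y k‖) :
    -- `x_k = ∑_j a_{k,j} e_{k,j}` form a block basis of the lexicographically
    -- ordered matrix basis `(e_{i,j})`:
    (∀ (k k' : Fin m) (j j' : Fin n), k < k' → y k j ≠ 0 → y k' j' ≠ 0 →
      Prod.Lex (· < ·) (· < ·) (Fin.castLE hmn k, j) (Fin.castLE hmn k', j')) ∧
    -- and the operator norm satisfies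
    -- `‖∑ b_k x_k‖ = max_{j ≤ n} ∑_k |b_k a_{k,j}| = ‖∑ b_k y_k‖_∞`:
    ∀ b : Fin m → ℝ,
      ‖∑ k, b k • ∑ j, y k j • matUnit n (Fin.castLE hmn k) j‖
        = (⨆ j : Fin n, ∑ k, |b k * y k j|) ∧
      ‖∑ k, b k • ∑ j, y k j • matUnit n (Fin.castLE hmn k) j‖
        = ‖∑ k, b k • y k‖ :=
  statement6_general m n hmn y hunc
end
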